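/- Let n ≥ 1, let 1 ≤ k ≤ n, and let x ∈ {−1,1}^{2n} satisfy the constraints x_{2n−2j+2} = −x_{2n−2j+1} for all j = 1,…,k. Then C_{2n}(x) = (1/2)·n(2n−1) + k/2 − (1/2)·(n−k)(2n−2k−1) + C_{2n−2k}(x̃), where x̃ = (x_1,…,x_{2n−2k}) ∈ {−1,1}^{2n−2k} is the restriction of x to the first 2n−2k coordinates (and C_0 is interpreted as 0). -/
import Mathlib

/-- MAX-CUT cost function of the complete graph on `m` vertices:
`C(x) = (1/2) * Σ_{i < j} (1 - x_i x_j)`. -/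
noncomputable def cutCost (m : ℕ) (x : Fin m → ℝ) : ℝ :=
  (1 / 2) * ∑ i : Fin m, ∑ j ∈ Finset.Ioi i, (1 - x i * x j)

lemma key (m : ℕ) (f : Fin m → Fin m → ℝ) (hf : ∀ i j, f i j = f j i) :
    ∑ i : Fin m, ∑ j : Fin m, f i j
      = (∑ i : Fin m, f i i) + 2 * ∑ i : Fin m, ∑ j ∈ Finset.Ioi i, f i j := by
  have hsplit : ∀ i : Fin m, Finset.Iio i ∪ Finset.Ioi i = ({i} : Finset (Fin m))ᶜ := by
    intro i; ext j
    simp only [Finset.mem_union, Finset.mem_Iio, Finset.mem_Ioi, Finset.mem_compl,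
      Finset.mem_singleton]
    exact ⟨fun h => h.elim ne_of_lt ne_of_gt, fun h => lt_or_gt_of_ne h⟩
  have h1 : ∀ i : Fin m, ∑ j : Fin m, f i j
      = f i i + (∑ j ∈ Finset.Iio i, f i j + ∑ j ∈ Finset.Ioi i, f i j) := by
    intro i
    rw [← Finset.sum_union (Finset.disjoint_left.mpr (by
        intro a ha hb
        simp only [Finset.mem_Iio] at ha
        simp only [Finset.mem_Ioi] at hb
        exact absurd (ha.trans hb) (lt_irrefl a))), hsplit,
      ← Finset.sum_compl_add_sum ({i} : Finset (Fin m)), Finset.sum_singleton, add_comm]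
  have h2 : ∑ i : Fin m, ∑ j ∈ Finset.Iio i, f i j
      = ∑ i : Fin m, ∑ j ∈ Finset.Ioi i, f i j := by
    rw [Finset.sum_comm' (t' := Finset.univ) (s' := fun j => Finset.Ioi j)
      (by intro i j; simp)]
    exact Finset.sum_congr rfl fun i _ => Finset.sum_congr rfl fun j _ => hf j i
  simp only [h1]
  rw [Finset.sum_add_distrib, Finset.sum_add_distrib, h2]
  ring

lemma cutCost_eq (m : ℕ) (x : Fin m → ℝ) (hx : ∀ i, x i = 1 ∨ x i = -1) :
    cutCost m x = (m : ℝ)^2 / 4 - (∑ i : Fin m, x i)^2 / 4 := by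
  have hsq : ∀ i, x i * x i = 1 := fun i => by
    rcases hx i with h | h <;> rw [h] <;> norm_num
  have hP := key m (fun _ _ => (1 : ℝ)) (fun _ _ => rfl)
  simp only [Finset.sum_const, Finset.card_univ, Fintype.card_fin, nsmul_eq_mul,
    mul_one] at hP
  have hS := key m (fun i j => x i * x j) (fun i j => mul_comm _ _)
  simp only [hsq, Finset.sum_const, Finset.card_univ, Fintype.card_fin, nsmul_eq_mul,
    mul_one] at hS
  rw [← Finset.sum_mul_sum] at hS
  have hC : cutCost m x = (1 / 2) * ((∑ i : Fin m, ((Finset.Ioi i).card : ℝ))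
      - ∑ i : Fin m, ∑ j ∈ Finset.Ioi i, x i * x j) := by
    rw [cutCost]
    simp only [Finset.sum_sub_distrib, Finset.sum_const, nsmul_eq_mul, mul_one]
  rw [hC]
  linear_combination (hS - hP) / 4

/-- For `n ≥ 1`, `1 ≤ k ≤ n`, and `x ∈ {-1,1}^{2n}` satisfying the constraints
`x_{2n-2j+2} = -x_{2n-2j+1}` for all `j = 1, …, k` (1-based indexing),
`C_{2n}(x) = (1/2)·n(2n-1) + k/2 - (1/2)·(n-k)(2n-2k-1) + C_{2n-2k}(x̃)`,
where `x̃` is the restriction of `x` to the first `2n-2k` coordinates. -/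
theorem cutCost_reduction_steps (n k : ℕ) (hn : 1 ≤ n) (hk1 : 1 ≤ k) (hk2 : k ≤ n)
    (x : Fin (2 * n) → ℝ) (hx : ∀ i, x i = 1 ∨ x i = -1)
    (hpair : ∀ j, ∀ _ : 1 ≤ j, ∀ _ : j ≤ k,
      x ⟨2 * n - 2 * j + 1, by omega⟩ = - x ⟨2 * n - 2 * j, by omega⟩) :
    cutCost (2 * n) x
      = (1 / 2) * ((n : ℝ) * (2 * (n : ℝ) - 1)) + (k : ℝ) / 2
        - (1 / 2) * (((n : ℝ) - (k : ℝ)) * (2 * (n : ℝ) - 2 * (k : ℝ) - 1))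
        + cutCost (2 * n - 2 * k) (fun i => x (Fin.castLE (by omega) i)) := by
  set y : ℕ → ℝ := fun i => if h : i < 2 * n then x ⟨i, h⟩ else 0 with hy
  have hyx : ∀ i : Fin (2 * n), x i = y i.val := by
    intro i; simp [hy, i.isLt]
  -- sum invariance
  have hsum : ∀ j, j ≤ k → ∑ i ∈ Finset.range (2 * n), y i
      = ∑ i ∈ Finset.range (2 * n - 2 * j), y i := by
    intro j hj
    induction j with
    | zero => simp
    | succ j ih =>
      rw [ih (by omega)]
      have hm : 2 * n - 2 * j = (2 * n - 2 * (j + 1)) + 1 + 1 := by omega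
      rw [hm, Finset.sum_range_succ, Finset.sum_range_succ]
      have hp := hpair (j + 1) (by omega) hj
      have e1 : (2 * n - 2 * (j+1)) < 2 * n := by omega
      have e2 : (2 * n - 2 * (j+1)) + 1 < 2 * n := by omega
      have : y (2 * n - 2 * (j+1) + 1) = - y (2 * n - 2 * (j+1)) := by
        simp only [hy, dif_pos e1, dif_pos e2]
        convert hp using 3 <;> omega
      rw [this]; ring
  have hS : (∑ i : Fin (2 * n), x i)
      = ∑ i : Fin (2 * n - 2 * k), x (Fin.castLE (by omega) i) := by
    have h1 : (∑ i : Fin (2 * n), x i) = ∑ i ∈ Finset.range (2 * n), y i := by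
      rw [← Fin.sum_univ_eq_sum_range]
      exact Finset.sum_congr rfl fun i _ => hyx i
    have h2 : (∑ i : Fin (2 * n - 2 * k), x (Fin.castLE (by omega) i))
        = ∑ i ∈ Finset.range (2 * n - 2 * k), y i := by
      rw [← Fin.sum_univ_eq_sum_range]
      refine Finset.sum_congr rfl fun i _ => ?_
      have : (Fin.castLE (by omega) i : Fin (2 * n)).val = i.val := rfl
      rw [hyx]; rw [this]
    rw [h1, h2, hsum k le_rfl]
  rw [cutCost_eq _ x hx, cutCost_eq _ _ (fun i => hx _), hS]
  have hc : ((2 * n - 2 * k : ℕ) : ℝ) = 2 * (n : ℝ) - 2 * (k : ℝ) := by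
    push_cast [Nat.cast_sub (by omega : 2 * k ≤ 2 * n)]
    ring
  rw [hc]
  push_cast
  ring
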